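/- Let G₁ and G₂ be connected simple graphs, each on n vertices with m edges, with Laplacian spectra μ₁ ≥ ⋯ ≥ μ_{n−1} > μ_n = 0 and λ₁ ≥ ⋯ ≥ λ_{n−1} > λ_n = 0 respectively, both having algebraic connectivity greater than two. If p is a positive integer such that 2m/(p+n) < min(μ_{n−1} − 2, λ_{n−1} − 2), then LE((Ḡ₁ ∨ K_p) × K_p) = LE((Ḡ₂ ∨ K_p) × K_p). -/

import Mathlib

open SimpleGraph Matrix Finset

/-- The number of edges of a simple graph. -/
noncomputable def edgeCount {V : Type*} (G : SimpleGraph V) : ℕ := G.edgeSet.ncard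

/-- The Laplacian spectrum of a finite simple graph, as a multiset of real numbers. -/
noncomputable def lapSpec {V : Type*} [Fintype V] (G : SimpleGraph V) : Multiset ℝ := by
  classical
  exact Finset.univ.val.map (G.posSemidef_lapMatrix ℝ).1.eigenvalues

/-- The signless Laplacian matrix `D + A` is Hermitian. -/
theorem signless_isHermitian {V : Type*} [Fintype V] [DecidableEq V] (G : SimpleGraph V)
    [DecidableRel G.Adj] : (G.degMatrix ℝ + G.adjMatrix ℝ).IsHermitian := by
  rw [Matrix.IsHermitian, conjTranspose_eq_transpose_of_trivial]
  exact Matrix.IsSymm.add (isSymm_degMatrix ℝ G) (isSymm_adjMatrix G)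

/-- The signless Laplacian spectrum of a finite simple graph, as a multiset of reals. -/
noncomputable def signlessLapSpec {V : Type*} [Fintype V] (G : SimpleGraph V) : Multiset ℝ := by
  classical
  exact Finset.univ.val.map (signless_isHermitian G).eigenvalues

/-- The Laplacian energy `LE(G) = ∑ |μ_i - 2m/n|`. -/
noncomputable def lapEnergy {V : Type*} [Fintype V] (G : SimpleGraph V) : ℝ :=
  ((lapSpec G).map (fun x => |x - 2 * (edgeCount G : ℝ) / (Fintype.card V : ℝ)|)).sum

/-- The signless Laplacian energy `LE⁺(G) = ∑ |μ⁺_i - 2m/n|`. -/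
noncomputable def signlessLapEnergy {V : Type*} [Fintype V] (G : SimpleGraph V) : ℝ :=
  ((signlessLapSpec G).map (fun x => |x - 2 * (edgeCount G : ℝ) / (Fintype.card V : ℝ)|)).sum

/-- The join `G ∨ H` of two graphs: disjoint union plus all edges between them. -/
def SimpleGraph.join {V W : Type*} (G : SimpleGraph V) (H : SimpleGraph W) :
    SimpleGraph (V ⊕ W) where
  Adj a b :=
    match a, b with
    | Sum.inl u, Sum.inl v => G.Adj u v
    | Sum.inr u, Sum.inr v => H.Adj u v
    | Sum.inl _, Sum.inr _ => True
    | Sum.inr _, Sum.inl _ => True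
  symm := ⟨by rintro (u | u) (v | v) h <;> simp_all [adj_comm]⟩
  loopless := ⟨by rintro (u | u) h <;> simp_all⟩

/-- The tensor (Kronecker) product `G ⊗ H` of two graphs. -/
def SimpleGraph.tensorProd {V W : Type*} (G : SimpleGraph V) (H : SimpleGraph W) :
    SimpleGraph (V × W) where
  Adj a b := G.Adj a.1 b.1 ∧ H.Adj a.2 b.2
  symm := ⟨fun a b h => ⟨G.adj_symm h.1, H.adj_symm h.2⟩⟩

/-!
Spectra are read off orthogonal eigenbases. For connected `G` the constant vector `1` spans the
kernel of `L(G)`, so an orthogonal eigenbasis of `L(G)` can be chosen containing `1`, all other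
vectors summing to zero. Since `L(Gᶜ) = n I - J - L(G)`, the same basis diagonalises `L(Gᶜ)`
with eigenvalues `0` and `n - μ`; lifted to `V ⊕ W` and completed by `1` and `(|W|, -|V|)` it
diagonalises the join with `K_p`, and tensor products of eigenvectors diagonalise a Cartesian
product. So the Laplacian spectrum of `(Ḡ ∨ K_p) × K_p` consists of the sums `a + b` with `a` in
`{0} ∪ {n + p (p times)} ∪ {n + p - μ_i : i < n - 1}` and `b` in `{0} ∪ {p (p - 1 times)}`.

Its mean is `n + 2p - 2 - 2m/(n+p)`, and the hypothesis on the algebraic connectivity puts every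
eigenvalue `n + p - μ_i + b` strictly below the mean. These therefore contribute to the Laplacian
energy only through their number and their sum, which depend on `Σ μ_i = 2m` alone; the remaining
eigenvalues do not depend on the graph at all.
-/

namespace Matrix

/-- Being indexed by `ι`, such a family is automatically a basis of `ι → ℝ`. -/
structure IsOrthEigenbasis {ι : Type*} [Fintype ι] (A : Matrix ι ι ℝ) (v : ι → ι → ℝ)
    (d : ι → ℝ) : Prop where
  mulVec_eq : ∀ i, A *ᵥ v i = d i • v i
  ne_zero : ∀ i, v i ≠ 0
  orthogonal : Pairwise fun i j => v i ⬝ᵥ v j = 0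

namespace IsOrthEigenbasis

variable {ι : Type*} [Fintype ι] {A : Matrix ι ι ℝ} {v : ι → ι → ℝ} {d : ι → ℝ}

theorem linearIndependent (h : A.IsOrthEigenbasis v d) : LinearIndependent ℝ v := by
  rw [Fintype.linearIndependent_iff]
  intro g hg i
  have hi := congrArg (· ⬝ᵥ v i) hg
  simp only [sum_dotProduct, smul_dotProduct, zero_dotProduct] at hi
  rw [Finset.sum_eq_single i (fun j _ hj => by rw [h.orthogonal hj, smul_zero]) (by simp)] at hi
  exact (smul_eq_zero.mp hi).resolve_right (mt dotProduct_self_eq_zero.mp (h.ne_zero i))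

theorem smul (h : A.IsOrthEigenbasis v d) {c : ι → ℝ} (hc : ∀ i, c i ≠ 0) :
    A.IsOrthEigenbasis (fun i => c i • v i) d where
  mulVec_eq i := by rw [mulVec_smul, h.mulVec_eq, smul_comm]
  ne_zero i := smul_ne_zero (hc i) (h.ne_zero i)
  orthogonal i j hij := by
    show c i • v i ⬝ᵥ c j • v j = 0
    rw [smul_dotProduct, dotProduct_smul, h.orthogonal hij, smul_zero, smul_zero]

theorem sum_eq_zero (h : A.IsOrthEigenbasis v d) {i₀ j : ι} (hv : v i₀ = 1) (hj : j ≠ i₀) :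
    ∑ a, v j a = 0 := by
  simpa [hv, dotProduct_one] using h.orthogonal hj

variable [DecidableEq ι]

theorem charpoly_eq (h : A.IsOrthEigenbasis v d) :
    A.charpoly = ∏ i, (Polynomial.X - Polynomial.C (d i)) := by
  let b := basisOfLinearIndependentOfCardEqFinrank' v h.linearIndependent (by simp)
  have hb : LinearMap.toMatrix b b (toLin' A) = diagonal d := by
    ext i j
    have hbj : v j = b j := by simp [b]
    rw [LinearMap.toMatrix_apply, toLin'_apply, ← hbj, h.mulVec_eq, hbj, map_smul, b.repr_self]
    by_cases hij : i = j <;> simp [hij]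
  rw [← charpoly_toLin', ← LinearMap.charpoly_toMatrix _ b, hb, charpoly_diagonal]

theorem roots_charpoly (h : A.IsOrthEigenbasis v d) : A.charpoly.roots = univ.val.map d := by
  rw [h.charpoly_eq, Finset.prod_eq_multiset_prod, ← Polynomial.roots_multiset_prod_X_sub_C
    (univ.val.map d), Multiset.map_map]
  rfl

end IsOrthEigenbasis

theorem IsHermitian.isOrthEigenbasis {ι : Type*} [Fintype ι] [DecidableEq ι] {A : Matrix ι ι ℝ}
    (hA : A.IsHermitian) : A.IsOrthEigenbasis (fun i => hA.eigenvectorBasis i) hA.eigenvalues where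
  mulVec_eq := hA.mulVec_eigenvectorBasis
  ne_zero i := by simpa using hA.eigenvectorBasis.orthonormal.ne_zero i
  orthogonal i j hij := by
    simpa [EuclideanSpace.inner_eq_star_dotProduct, dotProduct_comm] using
      hA.eigenvectorBasis.orthonormal.2 hij

end Matrix

theorem Finset.univ_val_map_eq_cons_erase {ι β : Type*} [Fintype ι] [DecidableEq ι] (f : ι → β)
    (i : ι) : univ.val.map f = f i ::ₘ (univ.erase i).val.map f := by
  rw [Finset.erase_val, ← Multiset.map_cons, Multiset.cons_erase (Finset.mem_univ_val i)]

namespace Multiset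

def sumset (S T : Multiset ℝ) : Multiset ℝ := S.bind fun a => T.map (a + ·)

theorem add_sumset (S₁ S₂ T : Multiset ℝ) : (S₁ + S₂).sumset T = S₁.sumset T + S₂.sumset T :=
  add_bind _ _ _

theorem card_sumset (S T : Multiset ℝ) : card (S.sumset T) = card S * card T := by
  simp [sumset, card_bind]

theorem sum_sumset (S T : Multiset ℝ) : (S.sumset T).sum = card T * S.sum + card S * T.sum := by
  have hT : ∀ a, (T.map (a + ·)).sum = card T * a + T.sum := fun a => by
    rw [sum_map_add, map_const', sum_replicate, map_id', nsmul_eq_mul]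
  rw [sumset, sum_bind, map_congr rfl fun a _ => hT a, sum_map_add, sum_map_mul_left, map_const',
    sum_replicate, nsmul_eq_mul, map_id']

theorem sum_map_const_sub (s : Multiset ℝ) (c : ℝ) : (s.map (c - ·)).sum = card s * c - s.sum := by
  rw [sum_map_sub, map_const', sum_replicate, map_id', nsmul_eq_mul]

noncomputable def sumAbsDev (S : Multiset ℝ) : ℝ := (S.map fun x => |x - S.sum / card S|).sum

theorem sum_map_abs_sub_of_le {t : Multiset ℝ} {c : ℝ} (h : ∀ x ∈ t, x ≤ c) :
    (t.map fun x => |x - c|).sum = card t * c - t.sum := by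
  rw [map_congr rfl fun x hx => abs_sub_comm x c ▸ abs_of_nonneg (sub_nonneg.mpr (h x hx)),
    sum_map_sub, map_const', sum_replicate, nsmul_eq_mul, map_id']

theorem sumAbsDev_add_eq_of_le_mean {F t₁ t₂ : Multiset ℝ} (hcard : card t₁ = card t₂)
    (hsum : t₁.sum = t₂.sum) (h₁ : ∀ x ∈ t₁, x ≤ (F + t₁).sum / card (F + t₁))
    (h₂ : ∀ x ∈ t₂, x ≤ (F + t₂).sum / card (F + t₂)) :
    sumAbsDev (F + t₁) = sumAbsDev (F + t₂) := by
  have hmean : (F + t₁).sum / card (F + t₁) = (F + t₂).sum / card (F + t₂) := by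
    simp [sum_add, hcard, hsum]
  rw [sumAbsDev, sumAbsDev, ← hmean]
  rw [← hmean] at h₂
  set c := (F + t₁).sum / card (F + t₁)
  rw [map_add, map_add, sum_add, sum_add, sum_map_abs_sub_of_le h₁, sum_map_abs_sub_of_le h₂, hcard,
    hsum]

end Multiset

namespace SimpleGraph

section Join

variable {V W : Type*} {G₁ : SimpleGraph V} {G₂ : SimpleGraph W}

@[simp] theorem join_adj_inl_inl {a b : V} : (G₁.join G₂).Adj (.inl a) (.inl b) ↔ G₁.Adj a b :=
  Iff.rfl

@[simp] theorem join_adj_inr_inr {a b : W} : (G₁.join G₂).Adj (.inr a) (.inr b) ↔ G₂.Adj a b :=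
  Iff.rfl

@[simp] theorem join_adj_inl_inr {a : V} {b : W} : (G₁.join G₂).Adj (.inl a) (.inr b) := trivial

@[simp] theorem join_adj_inr_inl {a : W} {b : V} : (G₁.join G₂).Adj (.inr a) (.inl b) := trivial

end Join

variable {V W : Type*} [Fintype V] [Fintype W]

section LapMatrix

variable [DecidableEq V] [DecidableEq W]

theorem lapSpec_eq_roots_charpoly (G : SimpleGraph V) [DecidableRel G.Adj] :
    lapSpec G = (G.lapMatrix ℝ).charpoly.roots := by
  rw [(G.isHermitian_lapMatrix ℝ).roots_charpoly_eq_eigenvalues, RCLike.ofReal_real_eq_id,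
    Function.id_comp, lapSpec]
  -- `lapSpec` is built with classical decidability instances
  congr!

theorem lapSpec_eq_of_isOrthEigenbasis {G : SimpleGraph V} [DecidableRel G.Adj] {v : V → V → ℝ}
    {d : V → ℝ} (h : (G.lapMatrix ℝ).IsOrthEigenbasis v d) : lapSpec G = univ.val.map d := by
  rw [lapSpec_eq_roots_charpoly, h.roots_charpoly]

theorem lapMatrix_mulVec_apply_eq_sum (G : SimpleGraph V) [DecidableRel G.Adj] (x : V → ℝ)
    (a : V) : (G.lapMatrix ℝ *ᵥ x) a = ∑ b, if G.Adj a b then x a - x b else 0 := by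
  rw [lapMatrix_mulVec_apply, degree_eq_sum_if_adj, neighborFinset_eq_filter, sum_filter, sum_mul,
    ← sum_sub_distrib]
  congr 1 with b
  split_ifs <;> simp

theorem lapMatrix_compl_mulVec_apply (G : SimpleGraph V) [DecidableRel G.Adj] (x : V → ℝ)
    (a : V) :
    (Gᶜ.lapMatrix ℝ *ᵥ x) a = Fintype.card V * x a - ∑ b, x b - (G.lapMatrix ℝ *ᵥ x) a := by
  have hsplit : ∀ b, (if Gᶜ.Adj a b then x a - x b else 0) =
      (x a - x b) - if G.Adj a b then x a - x b else 0 := by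
    intro b
    by_cases hab : a = b
    · simp [hab]
    · by_cases hG : G.Adj a b <;> simp [hab, hG, compl_adj]
  simp only [lapMatrix_mulVec_apply_eq_sum, hsplit, sum_sub_distrib, sum_const, card_univ,
    nsmul_eq_mul]

theorem lapMatrix_top_mulVec_apply (x : V → ℝ) (a : V) :
    ((⊤ : SimpleGraph V).lapMatrix ℝ *ᵥ x) a = Fintype.card V * x a - ∑ b, x b := by
  have hterm : ∀ b, (if (⊤ : SimpleGraph V).Adj a b then x a - x b else 0) = x a - x b := by
    intro b
    by_cases hab : a = b <;> simp [hab]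
  simp only [lapMatrix_mulVec_apply_eq_sum, hterm, sum_sub_distrib, sum_const, card_univ,
    nsmul_eq_mul]

theorem lapMatrix_mulVec_const (G : SimpleGraph V) [DecidableRel G.Adj] (c : ℝ) :
    G.lapMatrix ℝ *ᵥ (fun _ => c) = 0 := by
  ext a
  simp [lapMatrix_mulVec_apply_eq_sum]

theorem lapMatrix_join_mulVec_inl (G₁ : SimpleGraph V) (G₂ : SimpleGraph W) [DecidableRel G₁.Adj]
    [DecidableRel (G₁.join G₂).Adj] (x : V ⊕ W → ℝ) (a : V) :
    ((G₁.join G₂).lapMatrix ℝ *ᵥ x) (.inl a) =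
      (G₁.lapMatrix ℝ *ᵥ (x ∘ .inl)) a + Fintype.card W * x (.inl a) - ∑ b, x (.inr b) := by
  simp only [lapMatrix_mulVec_apply_eq_sum, Fintype.sum_sum_type, join_adj_inl_inl,
    join_adj_inl_inr, if_true, sum_sub_distrib, sum_const, card_univ, nsmul_eq_mul,
    Function.comp_apply]
  ring

theorem lapMatrix_join_mulVec_inr (G₁ : SimpleGraph V) (G₂ : SimpleGraph W) [DecidableRel G₂.Adj]
    [DecidableRel (G₁.join G₂).Adj] (x : V ⊕ W → ℝ) (b : W) :
    ((G₁.join G₂).lapMatrix ℝ *ᵥ x) (.inr b) =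
      (G₂.lapMatrix ℝ *ᵥ (x ∘ .inr)) b + Fintype.card V * x (.inr b) - ∑ a, x (.inl a) := by
  simp only [lapMatrix_mulVec_apply_eq_sum, Fintype.sum_sum_type, join_adj_inr_inr,
    join_adj_inr_inl, if_true, sum_sub_distrib, sum_const, card_univ, nsmul_eq_mul,
    Function.comp_apply]
  ring

theorem lapMatrix_boxProd_mulVec_apply (G : SimpleGraph V) (H : SimpleGraph W) [DecidableRel G.Adj]
    [DecidableRel H.Adj] [DecidableRel (G □ H).Adj] (x : V × W → ℝ) (a : V × W) :
    ((G □ H).lapMatrix ℝ *ᵥ x) a =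
      (G.lapMatrix ℝ *ᵥ fun a' => x (a', a.2)) a.1 +
        (H.lapMatrix ℝ *ᵥ fun b' => x (a.1, b')) a.2 := by
  simp only [lapMatrix_mulVec_apply, degree_boxProd, neighborFinset_boxProd, sum_disjUnion,
    sum_product, sum_singleton]
  push_cast
  ring

def joinEigenvectors (v : V → V → ℝ) (w : W → W → ℝ) (i₀ : V) (k₀ : W) :
    V ⊕ W → V ⊕ W → ℝ
  | .inl j => if j = i₀ then 1 else Sum.elim (v j) 0
  | .inr k => if k = k₀ then Sum.elim (fun _ => Fintype.card W) (fun _ => -Fintype.card V)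
      else Sum.elim 0 (w k)

theorem trace_lapMatrix (G : SimpleGraph V) [DecidableRel G.Adj] :
    (G.lapMatrix ℝ).trace = 2 * edgeCount G := by
  rw [lapMatrix, trace_sub, trace_adjMatrix, sub_zero, degMatrix, trace_diagonal, ← Nat.cast_sum,
    sum_degrees_eq_twice_card_edges, edgeCount, Set.ncard_eq_toFinset_card', edgeFinset]
  push_cast
  rfl

end LapMatrix

end SimpleGraph

namespace Matrix.IsOrthEigenbasis

open SimpleGraph

variable {V W : Type*} [Fintype V] [Fintype W] [DecidableEq V] [DecidableEq W]
  {G : SimpleGraph V} {H : SimpleGraph W} [DecidableRel G.Adj] [DecidableRel H.Adj]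
  {v : V → V → ℝ} {d : V → ℝ} {w : W → W → ℝ} {e : W → ℝ} {i₀ : V} {k₀ : W}

theorem lapMatrix_eigenvalue_eq_zero (h : (G.lapMatrix ℝ).IsOrthEigenbasis v d) (hv : v i₀ = 1) :
    d i₀ = 0 := by
  have hne : (1 : V → ℝ) ≠ 0 := hv ▸ h.ne_zero i₀
  have := h.mulVec_eq i₀
  rw [hv, Pi.one_def, lapMatrix_mulVec_const, eq_comm, smul_eq_zero, ← Pi.one_def] at this
  exact this.resolve_right hne

theorem lapMatrix_compl (h : (G.lapMatrix ℝ).IsOrthEigenbasis v d) (hv : v i₀ = 1) :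
    (Gᶜ.lapMatrix ℝ).IsOrthEigenbasis v fun i => if i = i₀ then 0 else Fintype.card V - d i where
  mulVec_eq i := by
    ext a
    rw [lapMatrix_compl_mulVec_apply, h.mulVec_eq]
    by_cases hi : i = i₀
    · simp [hi, hv, h.lapMatrix_eigenvalue_eq_zero hv]
    · simp [hi, h.sum_eq_zero hv hi, sub_mul]
  ne_zero := h.ne_zero
  orthogonal := h.orthogonal

theorem lapMatrix_top_eigenvalue (h : ((⊤ : SimpleGraph W).lapMatrix ℝ).IsOrthEigenbasis w e)
    (hw : w k₀ = 1) {k : W} (hk : k ≠ k₀) : e k = Fintype.card W := by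
  refine smul_left_injective ℝ (h.ne_zero k) ?_
  change e k • w k = (Fintype.card W : ℝ) • w k
  rw [← h.mulVec_eq k]
  ext b
  simp [lapMatrix_top_mulVec_apply, h.sum_eq_zero hw hk]

theorem lapMatrix_boxProd [DecidableRel (G □ H).Adj] (h₁ : (G.lapMatrix ℝ).IsOrthEigenbasis v d)
    (h₂ : (H.lapMatrix ℝ).IsOrthEigenbasis w e) :
    ((G □ H).lapMatrix ℝ).IsOrthEigenbasis (fun i x => v i.1 x.1 * w i.2 x.2)
      (fun i => d i.1 + e i.2) where
  mulVec_eq i := by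
    ext ⟨a, b⟩
    have hv : (fun a' => v i.1 a' * w i.2 b) = w i.2 b • v i.1 := by ext; simp [mul_comm]
    have hw : (fun b' => v i.1 a * w i.2 b') = v i.1 a • w i.2 := by ext; simp
    simp only [lapMatrix_boxProd_mulVec_apply, hv, hw, mulVec_smul, h₁.mulVec_eq, h₂.mulVec_eq]
    simp only [Pi.smul_apply, smul_eq_mul]
    ring
  ne_zero i := by
    obtain ⟨a, ha⟩ := Function.ne_iff.mp (h₁.ne_zero i.1)
    obtain ⟨b, hb⟩ := Function.ne_iff.mp (h₂.ne_zero i.2)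
    exact Function.ne_iff.mpr ⟨(a, b), mul_ne_zero ha hb⟩
  orthogonal i j hij := by
    have hprod : (fun x : V × W => v i.1 x.1 * w i.2 x.2) ⬝ᵥ (fun x => v j.1 x.1 * w j.2 x.2) =
        (v i.1 ⬝ᵥ v j.1) * (w i.2 ⬝ᵥ w j.2) := by
      simp only [dotProduct, Fintype.sum_prod_type, sum_mul_sum]
      exact sum_congr rfl fun a _ => sum_congr rfl fun b _ => by ring
    dsimp only
    rw [hprod]
    rcases eq_or_ne i.1 j.1 with h1 | h1
    · rw [h₂.orthogonal fun h2 => hij (Prod.ext h1 h2), mul_zero]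
    · rw [h₁.orthogonal h1, zero_mul]

theorem lapMatrix_join [DecidableRel (G.join H).Adj] (h₁ : (G.lapMatrix ℝ).IsOrthEigenbasis v d)
    (h₂ : (H.lapMatrix ℝ).IsOrthEigenbasis w e) (hv : v i₀ = 1) (hw : w k₀ = 1) :
    ((G.join H).lapMatrix ℝ).IsOrthEigenbasis (joinEigenvectors v w i₀ k₀)
      (Sum.elim (fun j => if j = i₀ then 0 else d j + Fintype.card W)
        (fun k => if k = k₀ then Fintype.card V + Fintype.card W else e k + Fintype.card V)) where
  mulVec_eq := by
    rintro (j | k)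
    · by_cases hj : j = i₀
      · ext (a | b) <;> simp [joinEigenvectors, hj, lapMatrix_join_mulVec_inl,
          lapMatrix_join_mulVec_inr, Function.comp_def, Pi.one_def, lapMatrix_mulVec_const]
      · ext (a | b) <;> simp [joinEigenvectors, hj, lapMatrix_join_mulVec_inl,
          lapMatrix_join_mulVec_inr, Function.comp_def, lapMatrix_mulVec_const, h₁.mulVec_eq,
          h₁.sum_eq_zero hv hj]
        ring
    · by_cases hk : k = k₀
      · ext (a | b) <;> simp [joinEigenvectors, hk, lapMatrix_join_mulVec_inl,
          lapMatrix_join_mulVec_inr, Function.comp_def, lapMatrix_mulVec_const] <;> ring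
      · ext (a | b) <;> simp [joinEigenvectors, hk, lapMatrix_join_mulVec_inl,
          lapMatrix_join_mulVec_inr, Function.comp_def, lapMatrix_mulVec_const, h₂.mulVec_eq,
          h₂.sum_eq_zero hw hk]
        ring
  ne_zero := by
    have : Nonempty V := ⟨i₀⟩
    rintro (j | k) hzero
    · by_cases hj : j = i₀
      · simp [joinEigenvectors, hj] at hzero
      · refine h₁.ne_zero j (funext fun a => ?_)
        simpa [joinEigenvectors, hj] using congrFun hzero (.inl a)
    · by_cases hk : k = k₀
      · simpa [joinEigenvectors, hk] using congrFun hzero (.inr k₀)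
      · refine h₂.ne_zero k (funext fun b => ?_)
        simpa [joinEigenvectors, hk] using congrFun hzero (.inr b)
  orthogonal := by
    have o₁ : ∀ j j', j ≠ j' → ∑ a, v j a * v j' a = 0 := fun _ _ h => h₁.orthogonal h
    have o₂ : ∀ k k', k ≠ k' → ∑ b, w k b * w k' b = 0 := fun _ _ h => h₂.orthogonal h
    rintro (j | k) (j' | k') hne <;> simp only [joinEigenvectors] <;> split_ifs <;>
      simp_all [dotProduct, Fintype.sum_sum_type, ← sum_mul, h₁.sum_eq_zero hv,
        h₂.sum_eq_zero hw, mul_comm]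

end Matrix.IsOrthEigenbasis

namespace SimpleGraph

variable {V W : Type*} [Fintype V] [Fintype W]

theorem Connected.exists_isOrthEigenbasis_lapMatrix [DecidableEq V] {G : SimpleGraph V}
    [DecidableRel G.Adj] (hG : G.Connected) :
    ∃ (v : V → V → ℝ) (d : V → ℝ) (i₀ : V), (G.lapMatrix ℝ).IsOrthEigenbasis v d ∧ v i₀ = 1 := by
  have hA := G.isHermitian_lapMatrix ℝ
  have h := hA.isOrthEigenbasis
  obtain ⟨i₀, -, hi₀⟩ : ∃ i₀ ∈ univ, hA.eigenvalues i₀ = 0 := by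
    have : Nonempty V := hG.nonempty
    simpa [Finset.prod_eq_zero_iff] using
      hA.det_eq_prod_eigenvalues.symm.trans G.det_lapMatrix_eq_zero
  have hconst := (lapMatrix_mulVec_eq_zero_iff_forall_reachable G).mp
    (by rw [h.mulVec_eq i₀, hi₀, zero_smul])
  obtain ⟨a⟩ := hG.nonempty
  set c := (hA.eigenvectorBasis i₀ : V → ℝ) a
  have hc : c ≠ 0 := fun hc0 => h.ne_zero i₀ (funext fun b => (hconst b a (hG b a)).trans hc0)
  refine ⟨_, _, i₀, h.smul (c := fun i => if i = i₀ then c⁻¹ else 1)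
    (fun i => by split_ifs <;> simp [hc]), ?_⟩
  ext b
  simpa [hconst b a (hG b a)] using inv_mul_cancel₀ hc

theorem sum_lapSpec (G : SimpleGraph V) : (lapSpec G).sum = 2 * edgeCount G := by
  classical
  rw [← trace_lapMatrix, (G.isHermitian_lapMatrix ℝ).trace_eq_sum_eigenvalues,
    lapSpec_eq_of_isOrthEigenbasis (G.isHermitian_lapMatrix ℝ).isOrthEigenbasis]
  rfl

theorem card_lapSpec (G : SimpleGraph V) : Multiset.card (lapSpec G) = Fintype.card V := by
  simp [lapSpec]

theorem lapEnergy_eq_sumAbsDev (G : SimpleGraph V) : lapEnergy G = (lapSpec G).sumAbsDev := by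
  rw [lapEnergy, Multiset.sumAbsDev, sum_lapSpec, card_lapSpec]

theorem lapSpec_boxProd (G : SimpleGraph V) (H : SimpleGraph W) :
    lapSpec (G □ H) = (lapSpec G).sumset (lapSpec H) := by
  classical
  have h₁ := (G.isHermitian_lapMatrix ℝ).isOrthEigenbasis
  have h₂ := (H.isHermitian_lapMatrix ℝ).isOrthEigenbasis
  rw [lapSpec_eq_of_isOrthEigenbasis (h₁.lapMatrix_boxProd h₂), lapSpec_eq_of_isOrthEigenbasis h₁,
    lapSpec_eq_of_isOrthEigenbasis h₂]
  rw [← Finset.univ_product_univ, Finset.product_val]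
  simp [Multiset.sumset, Multiset.bind_map, SProd.sprod, Multiset.product, Multiset.map_bind]

theorem lapSpec_top [Nonempty V] :
    lapSpec (⊤ : SimpleGraph V) =
      0 ::ₘ Multiset.replicate (Fintype.card V - 1) (Fintype.card V : ℝ) := by
  classical
  obtain ⟨w, e, k₀, h, hw⟩ := (connected_top (V := V)).exists_isOrthEigenbasis_lapMatrix
  rw [lapSpec_eq_of_isOrthEigenbasis h, univ_val_map_eq_cons_erase e k₀,
    h.lapMatrix_eigenvalue_eq_zero hw, Multiset.cons_inj_right, Multiset.eq_replicate]
  refine ⟨by simp, fun x hx => ?_⟩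
  obtain ⟨k, hk, rfl⟩ := Multiset.mem_map.mp hx
  exact h.lapMatrix_top_eigenvalue hw (Finset.ne_of_mem_erase hk)

theorem lapSpec_compl_join_top [Nonempty W] {G : SimpleGraph V} (hG : G.Connected)
    {s : Multiset ℝ} (hs : lapSpec G = 0 ::ₘ s) :
    lapSpec (Gᶜ.join (⊤ : SimpleGraph W)) =
      0 ::ₘ Multiset.replicate (Fintype.card W) (Fintype.card V + Fintype.card W : ℝ) +
        s.map ((Fintype.card V + Fintype.card W : ℝ) - ·) := by
  classical
  obtain ⟨v, d, i₀, h₁, hv⟩ := hG.exists_isOrthEigenbasis_lapMatrix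
  obtain ⟨w, e, k₀, h₂, hw⟩ := (connected_top (V := W)).exists_isOrthEigenbasis_lapMatrix
  rw [lapSpec_eq_of_isOrthEigenbasis h₁, univ_val_map_eq_cons_erase d i₀,
    h₁.lapMatrix_eigenvalue_eq_zero hv, Multiset.cons_inj_right] at hs
  have hinr : ∀ k, (if k = k₀ then (Fintype.card V + Fintype.card W : ℝ) else e k + Fintype.card V)
      = Fintype.card V + Fintype.card W := by
    intro k
    split_ifs with hk
    · rfl
    · rw [h₂.lapMatrix_top_eigenvalue hw hk, add_comm]
  rw [lapSpec_eq_of_isOrthEigenbasis ((h₁.lapMatrix_compl hv).lapMatrix_join h₂ hv hw), ← hs,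
    ← univ_disjSum_univ, val_disjSum, Multiset.map_disjSum, univ_val_map_eq_cons_erase _ i₀,
    Multiset.map_map]
  simp only [Sum.elim_inl, Sum.elim_inr, hinr, if_true, Multiset.map_const', Multiset.cons_add,
    Finset.card_val, card_univ]
  rw [add_comm]
  congr 2
  refine Multiset.map_congr rfl fun j hj => ?_
  simp only [Function.comp_apply, if_neg (Finset.ne_of_mem_erase hj)]
  ring

theorem card_add_one_of_lapSpec_eq_cons {G : SimpleGraph V} {s : Multiset ℝ}
    (hs : lapSpec G = 0 ::ₘ s) : Multiset.card s + 1 = Fintype.card V := by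
  rw [← card_lapSpec G, hs, Multiset.card_cons]

theorem sum_eq_of_lapSpec_eq_cons {G : SimpleGraph V} {s : Multiset ℝ}
    (hs : lapSpec G = 0 ::ₘ s) : s.sum = 2 * edgeCount G := by
  rw [← sum_lapSpec G, hs, Multiset.sum_cons, zero_add]

variable [Nonempty W] {G : SimpleGraph V} {s : Multiset ℝ}

theorem lapSpec_boxProd_compl_join_top (hG : G.Connected) (hs : lapSpec G = 0 ::ₘ s) :
    lapSpec ((Gᶜ.join (⊤ : SimpleGraph W)) □ (⊤ : SimpleGraph W)) =
      (0 ::ₘ Multiset.replicate (Fintype.card W) (Fintype.card V + Fintype.card W : ℝ)).sumset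
          (lapSpec (⊤ : SimpleGraph W)) +
        (s.map ((Fintype.card V + Fintype.card W : ℝ) - ·)).sumset
          (lapSpec (⊤ : SimpleGraph W)) := by
  rw [lapSpec_boxProd, lapSpec_compl_join_top hG hs, Multiset.add_sumset]

theorem mean_lapSpec_boxProd_compl_join_top (hG : G.Connected) (hs : lapSpec G = 0 ::ₘ s) :
    (lapSpec ((Gᶜ.join (⊤ : SimpleGraph W)) □ (⊤ : SimpleGraph W))).sum /
        Multiset.card (lapSpec ((Gᶜ.join (⊤ : SimpleGraph W)) □ (⊤ : SimpleGraph W))) =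
      Fintype.card V + 2 * Fintype.card W - 2 -
        2 * edgeCount G / (Fintype.card W + Fintype.card V : ℝ) := by
  have hq : 0 < Fintype.card W := Fintype.card_pos
  have hk : (Multiset.card s : ℝ) = Fintype.card V - 1 := by
    rw [← card_add_one_of_lapSpec_eq_cons hs]
    push_cast
    ring
  rw [lapSpec_boxProd, lapSpec_compl_join_top hG hs, Multiset.sum_sumset, Multiset.card_sumset,
    lapSpec_top]
  simp only [Multiset.sum_add, Multiset.card_add, Multiset.sum_cons, Multiset.card_cons,
    Multiset.sum_replicate, Multiset.card_replicate, Multiset.card_map, Multiset.sum_map_const_sub,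
    nsmul_eq_mul, sum_eq_of_lapSpec_eq_cons hs, Nat.sub_add_cancel hq]
  push_cast [Nat.cast_pred hq, hk]
  rw [show (Fintype.card W + 1 + (Fintype.card V - 1) : ℝ) = Fintype.card W + Fintype.card V by
    ring]
  have hq₀ : (Fintype.card W : ℝ) ≠ 0 := by positivity
  have hN₀ : (Fintype.card W + Fintype.card V : ℝ) ≠ 0 := by positivity
  field_simp
  ring

theorem le_mean_lapSpec_boxProd_compl_join_top (hG : G.Connected) (hs : lapSpec G = 0 ::ₘ s)
    (h : ∀ x ∈ s, 2 * (edgeCount G : ℝ) / (Fintype.card W + Fintype.card V) < x - 2) :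
    ∀ y ∈ (s.map ((Fintype.card V + Fintype.card W : ℝ) - ·)).sumset (lapSpec (⊤ : SimpleGraph W)),
      y ≤ (lapSpec ((Gᶜ.join (⊤ : SimpleGraph W)) □ (⊤ : SimpleGraph W))).sum /
        Multiset.card (lapSpec ((Gᶜ.join (⊤ : SimpleGraph W)) □ (⊤ : SimpleGraph W))) := by
  intro y hy
  obtain ⟨_, hx, b, hb, rfl⟩ : ∃ a ∈ s.map ((Fintype.card V + Fintype.card W : ℝ) - ·),
      ∃ b ∈ lapSpec (⊤ : SimpleGraph W), a + b = y := by
    simpa [Multiset.sumset, Multiset.mem_bind] using hy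
  obtain ⟨x, hxs, rfl⟩ := Multiset.mem_map.mp hx
  have hbq : b ≤ Fintype.card W := by
    rw [lapSpec_top] at hb
    rcases Multiset.mem_cons.mp hb with rfl | hb
    · positivity
    · exact (Multiset.eq_of_mem_replicate hb).le
  rw [mean_lapSpec_boxProd_compl_join_top hG hs]
  linarith [h x hxs]

theorem lapEnergy_boxProd_compl_join_top_eq {G₁ G₂ : SimpleGraph V} (hc₁ : G₁.Connected)
    (hc₂ : G₂.Connected) (hm : edgeCount G₁ = edgeCount G₂) {s₁ s₂ : Multiset ℝ}
    (hs₁ : lapSpec G₁ = 0 ::ₘ s₁) (hs₂ : lapSpec G₂ = 0 ::ₘ s₂)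
    (h₁ : ∀ x ∈ s₁, 2 * (edgeCount G₁ : ℝ) / (Fintype.card W + Fintype.card V) < x - 2)
    (h₂ : ∀ x ∈ s₂, 2 * (edgeCount G₂ : ℝ) / (Fintype.card W + Fintype.card V) < x - 2) :
    lapEnergy ((G₁ᶜ.join (⊤ : SimpleGraph W)) □ (⊤ : SimpleGraph W)) =
      lapEnergy ((G₂ᶜ.join (⊤ : SimpleGraph W)) □ (⊤ : SimpleGraph W)) := by
  have le₁ := le_mean_lapSpec_boxProd_compl_join_top hc₁ hs₁ h₁
  have le₂ := le_mean_lapSpec_boxProd_compl_join_top hc₂ hs₂ h₂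
  have hcard : Multiset.card s₁ = Multiset.card s₂ := by
    have := card_add_one_of_lapSpec_eq_cons hs₁
    have := card_add_one_of_lapSpec_eq_cons hs₂
    omega
  rw [lapSpec_boxProd_compl_join_top hc₁ hs₁] at le₁
  rw [lapSpec_boxProd_compl_join_top hc₂ hs₂] at le₂
  rw [lapEnergy_eq_sumAbsDev, lapEnergy_eq_sumAbsDev, lapSpec_boxProd_compl_join_top hc₁ hs₁,
    lapSpec_boxProd_compl_join_top hc₂ hs₂]
  refine Multiset.sumAbsDev_add_eq_of_le_mean ?_ ?_ le₁ le₂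
  · simp [Multiset.card_sumset, hcard]
  · simp [Multiset.sum_sumset, Multiset.sum_map_const_sub, hcard, sum_eq_of_lapSpec_eq_cons hs₁,
      sum_eq_of_lapSpec_eq_cons hs₂, hm]

end SimpleGraph

theorem Antitone.le_of_mem_map_erase_last {n : ℕ} (hn : 2 ≤ n) {μ : Fin n → ℝ} (hμ : Antitone μ)
    {x : ℝ} (hx : x ∈ (univ.erase ⟨n - 1, by omega⟩).val.map μ) : μ ⟨n - 2, by omega⟩ ≤ x := by
  obtain ⟨i, hi, rfl⟩ := Multiset.mem_map.mp hx
  have hi : i.val ≠ n - 1 := fun h => Finset.ne_of_mem_erase (Finset.mem_val.mp hi) (Fin.ext h)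
  exact hμ (Fin.le_def.mpr (by simp; omega))

theorem stmt11 (n m p : ℕ) (hn : 2 ≤ n) (hp : 0 < p)
    (G₁ G₂ : SimpleGraph (Fin n))
    (hc₁ : G₁.Connected) (hc₂ : G₂.Connected)
    (hm₁ : edgeCount G₁ = m) (hm₂ : edgeCount G₂ = m)
    (μ ν : Fin n → ℝ) (hμmono : Antitone μ) (hνmono : Antitone ν)
    (hμspec : lapSpec G₁ = Finset.univ.val.map μ)
    (hνspec : lapSpec G₂ = Finset.univ.val.map ν)
    (hμlast : μ ⟨n - 1, by omega⟩ = 0) (hνlast : ν ⟨n - 1, by omega⟩ = 0)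
    (hcond : 2 * (m : ℝ) / ((p : ℝ) + (n : ℝ)) < min (μ ⟨n - 2, by omega⟩ - 2) (ν ⟨n - 2, by omega⟩ - 2)) :
    lapEnergy ((SimpleGraph.join G₁ᶜ (⊤ : SimpleGraph (Fin p))) □ (⊤ : SimpleGraph (Fin p))) =
      lapEnergy ((SimpleGraph.join G₂ᶜ (⊤ : SimpleGraph (Fin p))) □ (⊤ : SimpleGraph (Fin p))) := by
  have : Nonempty (Fin p) := ⟨⟨0, hp⟩⟩
  refine lapEnergy_boxProd_compl_join_top_eq hc₁ hc₂ (hm₁.trans hm₂.symm)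
    (by rw [hμspec, univ_val_map_eq_cons_erase μ ⟨n - 1, by omega⟩, hμlast])
    (by rw [hνspec, univ_val_map_eq_cons_erase ν ⟨n - 1, by omega⟩, hνlast]) ?_ ?_
  · intro x hx
    have := hμmono.le_of_mem_map_erase_last hn hx
    simp only [Fintype.card_fin, hm₁]
    linarith [min_le_left (μ ⟨n - 2, by omega⟩ - 2) (ν ⟨n - 2, by omega⟩ - 2)]
  · intro x hx
    have := hνmono.le_of_mem_map_erase_last hn hx
    simp only [Fintype.card_fin, hm₂]
    linarith [min_le_right (μ ⟨n - 2, by omega⟩ - 2) (ν ⟨n - 2, by omega⟩ - 2)]
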